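/- arXiv:2405.03964 — 3 statements merged into one kernel-verified Lean document; each statement's English description precedes it below -/
import Mathlib

section
/- Let {(u_i, v_i)}_{i=1}^m and {(u'_j, v'_j)}_{j=1}^k be two quasi-bases for E. Then sum_{i=1}^m u_i v_i = sum_{j=1}^k u'_j v'_j; that is, the Watatani index of E does not depend on the choice of quasi-basis. -/
/-- The Watatani index of a linear map `E` on a unital complex algebra does not depend
on the choice of quasi-basis: if `{(u i, v i)}` and `{(u' j, v' j)}` are both
quasi-bases for `E`, then `∑ i, u i * v i = ∑ j, u' j * v' j`. -/
theorem watatani_index_independent_of_quasi_basis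
    {A : Type*} [Ring A] [Algebra ℂ A] (E : A →ₗ[ℂ] A)
    {m k : ℕ} (u v : Fin m → A) (u' v' : Fin k → A)
    (huv : ∀ a : A, (∑ i, u i * E (v i * a) = a) ∧ (∑ i, E (a * u i) * v i = a))
    (huv' : ∀ a : A, (∑ j, u' j * E (v' j * a) = a) ∧ (∑ j, E (a * u' j) * v' j = a)) :
    ∑ i, u i * v i = ∑ j, u' j * v' j := by
  calc ∑ i, u i * v i
      = ∑ i, u i * (∑ j, E (v i * u' j) * v' j) := by
        refine Finset.sum_congr rfl fun i _ => ?_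
        rw [(huv' (v i)).2]
    _ = ∑ j, (∑ i, u i * E (v i * u' j)) * v' j := by
        simp_rw [Finset.mul_sum, Finset.sum_mul, mul_assoc]
        rw [Finset.sum_comm]
    _ = ∑ j, u' j * v' j := by
        refine Finset.sum_congr rfl fun j _ => ?_
        rw [(huv (u' j)).1]
end

section
/- Let {(u_i, v_i)}_{i=1}^m be a quasi-basis for E. Then the element Index E = sum_{i=1}^m u_i v_i commutes with every element of A, i.e., (sum_{i=1}^m u_i v_i) a = a (sum_{i=1}^m u_i v_i) for all a ∈ A. -/
/-- If `{(u i, v i)}` is a quasi-basis for a linear map `E` on a unital complex algebra `A`,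
then the Watatani index `∑ i, u i * v i` commutes with every element of `A`. -/
theorem watatani_index_central
    {A : Type*} [Ring A] [Algebra ℂ A] (E : A →ₗ[ℂ] A)
    {m : ℕ} (u v : Fin m → A)
    (huv : ∀ a : A, (∑ i, u i * E (v i * a) = a) ∧ (∑ i, E (a * u i) * v i = a)) :
    ∀ a : A, (∑ i, u i * v i) * a = a * (∑ i, u i * v i) := by
  intro a
  calc (∑ i, u i * v i) * a = ∑ i, u i * (v i * a) := by
        rw [Finset.sum_mul]; simp [mul_assoc]
    _ = ∑ i, u i * (∑ j, E ((v i * a) * u j) * v j) := by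
        simp_rw [fun b => (huv b).2]
    _ = ∑ j, (∑ i, u i * E (v i * (a * u j))) * v j := by
        simp_rw [Finset.mul_sum, Finset.sum_mul, mul_assoc]
        rw [Finset.sum_comm]
    _ = ∑ j, (a * u j) * v j := by simp_rw [fun b => (huv b).1]
    _ = a * (∑ j, u j * v j) := by rw [Finset.mul_sum]; simp [mul_assoc]
end

section
/- The map E : A → A is a conditional expectation onto P: E is linear, E(f) = f for every f ∈ P, E(p·f) = p·E(f) and E(f·p) = E(f)·p for every p ∈ P and f ∈ A, E(f*) = E(f)* for every f ∈ A, and ‖E(f)‖ ≤ ‖f‖ for every f ∈ A (sup norm). -/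
/-- The averaging map `E` on `A = C(Σ i, X i, ℂ)` given by
`E(f)_i(t) = (1/n) ∑ k, f_k (σ_i^k t)` is a conditional expectation onto
`P = {f | f_i ∘ σ_j^i = f_j for all i, j}`: it is linear, takes values in `P`,
fixes `P` pointwise, is a `P`-bimodule map, is star-preserving, and is contractive
for the sup norm. -/
theorem averaging_map_is_conditional_expectation
    {n : ℕ} (hn : 1 ≤ n)
    (X : Fin n → Type*) [∀ i, TopologicalSpace (X i)]
    [∀ i, CompactSpace (X i)] [∀ i, T2Space (X i)] [∀ i, Nonempty (X i)]
    (σ : ∀ i j : Fin n, X i ≃ₜ X j)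
    (hσ : ∀ (i j k : Fin n) (t : X i), σ j k (σ i j t) = σ i k t)
    (hσid : ∀ (i : Fin n) (t : X i), σ i i t = t)
    (P : Set C((Σ i, X i), ℂ))
    (hP : P = {f | ∀ (i j : Fin n) (t : X j), f ⟨i, σ j i t⟩ = f ⟨j, t⟩})
    (E : C((Σ i, X i), ℂ) → C((Σ i, X i), ℂ))
    (hE : ∀ (f : C((Σ i, X i), ℂ)) (i : Fin n) (t : X i),
      E f ⟨i, t⟩ = (n : ℂ)⁻¹ * ∑ k, f ⟨k, σ i k t⟩) :
    (∀ (c : ℂ) (f g : C((Σ i, X i), ℂ)), E (c • f + g) = c • E f + E g) ∧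
    (∀ f, E f ∈ P) ∧
    (∀ f ∈ P, E f = f) ∧
    (∀ p ∈ P, ∀ f, E (p * f) = p * E f ∧ E (f * p) = E f * p) ∧
    (∀ f, E (star f) = star (E f)) ∧
    (∀ f, ‖E f‖ ≤ ‖f‖) := by
  have hn0 : (n : ℂ) ≠ 0 := by exact_mod_cast Nat.one_le_iff_ne_zero.mp hn
  subst hP
  refine ⟨?_, ?_, ?_, ?_, ?_, ?_⟩
  · intro c f g
    ext ⟨i, t⟩
    simp only [ContinuousMap.add_apply, ContinuousMap.smul_apply, hE,
      ContinuousMap.add_apply, ContinuousMap.smul_apply, smul_eq_mul]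
    rw [Finset.sum_add_distrib, ← Finset.mul_sum]
    ring
  · intro f i j t
    rw [hE, hE]
    congr 1
    apply Finset.sum_congr rfl
    intro k _
    rw [hσ]
  · intro f hf
    ext ⟨i, t⟩
    rw [hE]
    have : ∀ k : Fin n, f ⟨k, σ i k t⟩ = f ⟨i, t⟩ := fun k => hf k i t
    rw [Finset.sum_congr rfl (fun k _ => this k), Finset.sum_const,
      Finset.card_univ, Fintype.card_fin, nsmul_eq_mul]
    field_simp
  · intro p hp f
    constructor
    · ext ⟨i, t⟩
      simp only [ContinuousMap.mul_apply, hE, Finset.mul_sum]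
      apply Finset.sum_congr rfl
      intro k _
      rw [hp k i t]
      ring
    · ext ⟨i, t⟩
      simp only [ContinuousMap.mul_apply, hE, Finset.mul_sum, Finset.sum_mul]
      apply Finset.sum_congr rfl
      intro k _
      rw [hp k i t]
      ring
  · intro f
    ext ⟨i, t⟩
    simp only [ContinuousMap.star_apply, hE, star_mul', star_inv₀,
      Complex.star_def, Complex.conj_natCast]
    rw [map_sum, Finset.mul_sum]
  · intro f
    rw [ContinuousMap.norm_le _ (norm_nonneg f)]
    rintro ⟨i, t⟩
    rw [hE]
    calc ‖(n : ℂ)⁻¹ * ∑ k, f ⟨k, σ i k t⟩‖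
        = (n : ℝ)⁻¹ * ‖∑ k, f ⟨k, σ i k t⟩‖ := by
          rw [norm_mul, norm_inv, Complex.norm_natCast]
      _ ≤ (n : ℝ)⁻¹ * ∑ k : Fin n, ‖f ⟨k, σ i k t⟩‖ := by
          gcongr; exact norm_sum_le _ _
      _ ≤ (n : ℝ)⁻¹ * ∑ k : Fin n, ‖f‖ := by
          gcongr with k
          exact f.norm_coe_le_norm _
      _ = ‖f‖ := by
          rw [Finset.sum_const, Finset.card_univ, Fintype.card_fin, nsmul_eq_mul]
          have : (n : ℝ) ≠ 0 := by exact_mod_cast Nat.one_le_iff_ne_zero.mp hn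
          field_simp
end
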